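/- arXiv:2403.11533 — 4 statements merged into one kernel-verified Lean document; each statement's English description precedes it below -/
import Mathlib

section
/- Let a, b, c, d, e, g be strictly positive real numbers and define f(γ₁,γ₂) = (γ₁/γ₂)a + (γ₂/γ₁)b + γ₁γ₂c + d/(γ₁γ₂) + 2γ₁e + 2g/γ₁ for γ₁, γ₂ > 0. Then f attains a minimum on the open positive quadrant {(γ₁,γ₂) : γ₁ > 0, γ₂ > 0}, and the minimizer is unique. -/
/-!
In logarithmic coordinates `γ = (exp x₁, exp x₂)` the objective becomes a sum of terms
`k exp t + l exp (-t)` with `t` ranging over the linear forms `x₁`, `x₁ - x₂` and `x₁ + x₂`.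
Each term is convex, the first two are strictly convex in `t`, and `x₁`, `x₁ - x₂` determine `x`,
so the sum is strictly convex on `ℝ²`; the same two terms grow like `|x₁| + |x₁ - x₂| ≥ ‖x‖`,
so it is coercive. Hence it has exactly one minimizer, and `exp` maps `ℝ²` bijectively onto the
open positive quadrant.
-/

open Real Filter Set

theorem existsUnique_forall_le_of_strictConvexOn {E : Type*} [TopologicalSpace E]
    [AddCommGroup E] [Module ℝ E] [Nonempty E] {F : E → ℝ} (hcont : Continuous F)
    (hconv : StrictConvexOn ℝ univ F) (hlim : Tendsto F (cocompact E) atTop) :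
    ∃! x, ∀ y, F x ≤ F y := by
  obtain ⟨x, hx⟩ := hcont.exists_forall_le hlim
  exact ⟨x, hx, fun y hy => hconv.eq_of_isMinOn (isMinOn_univ_iff.mpr hy)
    (isMinOn_univ_iff.mpr hx) trivial trivial⟩

theorem StrictConvexOn.add_comp_linearMap {E : Type*} [AddCommGroup E] [Module ℝ E]
    {f g : ℝ → ℝ} (hf : StrictConvexOn ℝ univ f) (hg : StrictConvexOn ℝ univ g)
    (L M : E →ₗ[ℝ] ℝ) (hLM : ∀ x y, L x = L y → M x = M y → x = y) :
    StrictConvexOn ℝ univ (fun x => f (L x) + g (M x)) := by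
  refine ⟨convex_univ, fun x _ y _ hxy a b ha hb hab => ?_⟩
  simp only [map_add, map_smul, smul_eq_mul]
  by_cases hL : L x = L y
  · have hM : M x ≠ M y := fun hM => hxy (hLM x y hL hM)
    have hf' := hf.convexOn.2 trivial trivial ha.le hb.le hab (x := L x) (y := L y)
    have hg' := hg.2 trivial trivial hM ha hb hab
    simp only [smul_eq_mul] at hf' hg'
    linarith
  · have hf' := hf.2 trivial trivial hL ha hb hab
    have hg' := hg.convexOn.2 trivial trivial ha.le hb.le hab (x := M x) (y := M y)
    simp only [smul_eq_mul] at hf' hg'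
    linarith

theorem strictConvexOn_const_mul_exp {k : ℝ} (hk : 0 < k) :
    StrictConvexOn ℝ univ (fun t => k * exp t) := by
  refine ⟨convex_univ, fun x _ y _ hxy a b ha hb hab => ?_⟩
  have h := strictConvexOn_exp.2 trivial trivial hxy ha hb hab
  simp only [smul_eq_mul] at h ⊢
  calc k * exp (a * x + b * y) < k * (a * exp x + b * exp y) := mul_lt_mul_of_pos_left h hk
    _ = a * (k * exp x) + b * (k * exp y) := by ring

theorem convexOn_const_mul_exp_neg {l : ℝ} (hl : 0 ≤ l) :
    ConvexOn ℝ univ (fun t => l * exp (-t)) :=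
  (convexOn_exp.comp_linearMap (-LinearMap.id)).smul hl

noncomputable def expPair (k l t : ℝ) : ℝ := k * exp t + l * exp (-t)

theorem expPair_nonneg {k l : ℝ} (hk : 0 ≤ k) (hl : 0 ≤ l) (t : ℝ) : 0 ≤ expPair k l t := by
  unfold expPair; positivity

theorem min_mul_abs_le_expPair {k l : ℝ} (hk : 0 ≤ k) (hl : 0 ≤ l) (t : ℝ) :
    min k l * |t| ≤ expPair k l t := by
  have h₁ := add_one_le_exp t
  have h₂ := add_one_le_exp (-t)
  have := min_le_left k l
  have := min_le_right k l
  unfold expPair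
  rcases le_total 0 t with ht | ht
  · rw [abs_of_nonneg ht]; nlinarith [exp_pos (-t)]
  · rw [abs_of_nonpos ht]; nlinarith [exp_pos t]

theorem convexOn_expPair {k l : ℝ} (hk : 0 ≤ k) (hl : 0 ≤ l) :
    ConvexOn ℝ univ (expPair k l) :=
  (convexOn_exp.smul hk).add (convexOn_const_mul_exp_neg hl)

theorem strictConvexOn_expPair {k l : ℝ} (hk : 0 < k) (hl : 0 ≤ l) :
    StrictConvexOn ℝ univ (expPair k l) :=
  (strictConvexOn_const_mul_exp hk).add_convexOn (convexOn_const_mul_exp_neg hl)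

theorem Prod.norm_le_abs_fst_add_abs_sub (x : ℝ × ℝ) : ‖x‖ ≤ |x.1| + |x.1 - x.2| := by
  rw [Prod.norm_def, Real.norm_eq_abs, Real.norm_eq_abs]
  refine max_le (le_add_of_nonneg_right (abs_nonneg _)) ?_
  calc |x.2| = |x.1 - (x.1 - x.2)| := by ring_nf
    _ ≤ |x.1| + |x.1 - x.2| := abs_sub _ _

section Objective

variable {a b c d e g : ℝ}

noncomputable def objective (a b c d e g : ℝ) (γ : ℝ × ℝ) : ℝ :=
  (γ.1 / γ.2) * a + (γ.2 / γ.1) * b + γ.1 * γ.2 * c + d / (γ.1 * γ.2)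
    + 2 * γ.1 * e + 2 * g / γ.1

noncomputable def logObjective (a b c d e g : ℝ) (x : ℝ × ℝ) : ℝ :=
  expPair (2 * e) (2 * g) x.1 + expPair a b (x.1 - x.2) + expPair c d (x.1 + x.2)

theorem objective_exp (x : ℝ × ℝ) :
    objective a b c d e g (exp x.1, exp x.2) = logObjective a b c d e g x := by
  simp only [objective, logObjective, expPair, exp_sub, exp_add, exp_neg, div_eq_mul_inv,
    mul_inv, inv_inv]
  ring

theorem strictConvexOn_logObjective (ha : 0 < a) (hb : 0 < b) (hc : 0 < c) (hd : 0 < d)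
    (he : 0 < e) (hg : 0 < g) : StrictConvexOn ℝ univ (logObjective a b c d e g) :=
  ((strictConvexOn_expPair (by positivity) (by positivity)).add_comp_linearMap
      (strictConvexOn_expPair ha hb.le) (LinearMap.fst ℝ ℝ ℝ)
      (LinearMap.fst ℝ ℝ ℝ - LinearMap.snd ℝ ℝ ℝ)
      fun x y h₁ h₂ => Prod.ext h₁ (by simp only [LinearMap.sub_apply,
        LinearMap.fst_apply, LinearMap.snd_apply] at h₁ h₂; linarith)).add_convexOn
    ((convexOn_expPair hc.le hd.le).comp_linearMap (LinearMap.fst ℝ ℝ ℝ + LinearMap.snd ℝ ℝ ℝ))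

theorem tendsto_logObjective_cocompact (ha : 0 < a) (hb : 0 < b) (hc : 0 < c) (hd : 0 < d)
    (he : 0 < e) (hg : 0 < g) :
    Tendsto (logObjective a b c d e g) (cocompact (ℝ × ℝ)) atTop := by
  set m₁ := min (2 * e) (2 * g)
  set m₂ := min a b
  have hm : 0 < min m₁ m₂ := lt_min (lt_min (by positivity) (by positivity)) (lt_min ha hb)
  refine tendsto_atTop_mono (fun x => ?_) (tendsto_norm_cocompact_atTop.const_mul_atTop hm)
  have h₁ := min_mul_abs_le_expPair (k := 2 * e) (l := 2 * g) (by positivity) (by positivity) x.1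
  have h₂ := min_mul_abs_le_expPair ha.le hb.le (x.1 - x.2)
  have h₃ := expPair_nonneg hc.le hd.le (x.1 + x.2)
  calc min m₁ m₂ * ‖x‖ ≤ min m₁ m₂ * (|x.1| + |x.1 - x.2|) := by
        gcongr; exact x.norm_le_abs_fst_add_abs_sub
    _ ≤ m₁ * |x.1| + m₂ * |x.1 - x.2| := by
        nlinarith [min_le_left m₁ m₂, min_le_right m₁ m₂, abs_nonneg x.1, abs_nonneg (x.1 - x.2)]
    _ ≤ logObjective a b c d e g x := by unfold logObjective; linarith

theorem continuous_logObjective : Continuous (logObjective a b c d e g) := by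
  unfold logObjective expPair; fun_prop

end Objective

theorem exists_exp_eq_of_pos {q : ℝ × ℝ} (h₁ : 0 < q.1) (h₂ : 0 < q.2) :
    ∃ y : ℝ × ℝ, (exp y.1, exp y.2) = q :=
  ⟨(log q.1, log q.2), by simp only [exp_log h₁, exp_log h₂]⟩

/-- The objective `f(γ₁,γ₂) = (γ₁/γ₂)a + (γ₂/γ₁)b + γ₁γ₂c + d/(γ₁γ₂)
+ 2γ₁e + 2g/γ₁` (with positive coefficients) attains a minimum on the open positive
quadrant, and the minimizer is unique. -/
theorem stmt3 (a b c d e g : ℝ) (ha : 0 < a) (hb : 0 < b) (hc : 0 < c)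
    (hd : 0 < d) (he : 0 < e) (hg : 0 < g) :
    ∃ p : ℝ × ℝ, 0 < p.1 ∧ 0 < p.2 ∧
      (∀ q : ℝ × ℝ, 0 < q.1 → 0 < q.2 →
        (p.1 / p.2) * a + (p.2 / p.1) * b + p.1 * p.2 * c + d / (p.1 * p.2)
            + 2 * p.1 * e + 2 * g / p.1 ≤
          (q.1 / q.2) * a + (q.2 / q.1) * b + q.1 * q.2 * c + d / (q.1 * q.2)
            + 2 * q.1 * e + 2 * g / q.1) ∧
      (∀ q : ℝ × ℝ, 0 < q.1 → 0 < q.2 →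
        (∀ r : ℝ × ℝ, 0 < r.1 → 0 < r.2 →
          (q.1 / q.2) * a + (q.2 / q.1) * b + q.1 * q.2 * c + d / (q.1 * q.2)
              + 2 * q.1 * e + 2 * g / q.1 ≤
            (r.1 / r.2) * a + (r.2 / r.1) * b + r.1 * r.2 * c + d / (r.1 * r.2)
              + 2 * r.1 * e + 2 * g / r.1) → q = p) := by
  obtain ⟨x, hx, hx_unique⟩ := existsUnique_forall_le_of_strictConvexOn continuous_logObjective
    (strictConvexOn_logObjective ha hb hc hd he hg)
    (tendsto_logObjective_cocompact ha hb hc hd he hg)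
  refine ⟨(exp x.1, exp x.2), exp_pos _, exp_pos _, fun q hq₁ hq₂ => ?_, fun q hq₁ hq₂ hq => ?_⟩
  · obtain ⟨y, rfl⟩ := exists_exp_eq_of_pos hq₁ hq₂
    change objective a b c d e g _ ≤ objective a b c d e g _
    simpa only [objective_exp] using hx y
  · obtain ⟨y, rfl⟩ := exists_exp_eq_of_pos hq₁ hq₂
    rw [hx_unique y fun z => ?_]
    have hyz : objective a b c d e g _ ≤ objective a b c d e g _ :=
      hq (exp z.1, exp z.2) (exp_pos _) (exp_pos _)
    simpa only [objective_exp] using hyz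
end

section
/- Let a, b, c, d, e, g be strictly positive real numbers and define f(γ₁,γ₂) = (γ₁/γ₂)a + (γ₂/γ₁)b + γ₁γ₂c + d/(γ₁γ₂) + 2γ₁e + 2g/γ₁ for γ₁, γ₂ > 0. If (γ₁*, γ₂*) with γ₁*, γ₂* > 0 is a critical point of f (both partial derivatives vanish), then γ₂* is a root of the quartic polynomial p(γ) = cb·γ⁴ + (cg + eb)·γ³ − (de + ga)·γ − da. -/
/-!
Clearing denominators, `∂f/∂γ₂ = 0` reads `γ₁² (c γ₂² - a) = d - b γ₂²`, and the sum of the two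
cleared critical-point equations reads `γ₁² (e γ₂ + c γ₂²) = d + g γ₂`. Eliminating `γ₁²` between
these two linear equations leaves exactly `p(γ₂) = 0`.
-/

noncomputable def metricObjective (a b c d e g γ₁ γ₂ : ℝ) : ℝ :=
  (γ₁ / γ₂) * a + (γ₂ / γ₁) * b + γ₁ * γ₂ * c + d / (γ₁ * γ₂) + 2 * γ₁ * e + 2 * g / γ₁

section Derivatives

variable (a b c d e g : ℝ) {γ₁ γ₂ : ℝ}

theorem hasDerivAt_metricObjective_left (hγ₁ : γ₁ ≠ 0) (hγ₂ : γ₂ ≠ 0) :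
    HasDerivAt (fun t => metricObjective a b c d e g t γ₂)
      ((a * γ₁ ^ 2 - b * γ₂ ^ 2 + c * γ₁ ^ 2 * γ₂ ^ 2 - d + 2 * e * γ₁ ^ 2 * γ₂ - 2 * g * γ₂)
        / (γ₁ ^ 2 * γ₂)) γ₁ := by
  have h := (((((((hasDerivAt_id γ₁).div_const γ₂).mul_const a).add
      (((hasDerivAt_const γ₁ γ₂).div (hasDerivAt_id γ₁) hγ₁).mul_const b)).add
      (((hasDerivAt_id γ₁).mul_const γ₂).mul_const c)).add
      ((hasDerivAt_const γ₁ d).div ((hasDerivAt_id γ₁).mul_const γ₂)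
        (mul_ne_zero hγ₁ hγ₂))).add
      (((hasDerivAt_id γ₁).const_mul 2).mul_const e)).add
      ((hasDerivAt_const γ₁ (2 * g)).div (hasDerivAt_id γ₁) hγ₁)
  refine h.congr_deriv ?_
  simp only [id]
  field_simp
  ring

theorem hasDerivAt_metricObjective_right (hγ₁ : γ₁ ≠ 0) (hγ₂ : γ₂ ≠ 0) :
    HasDerivAt (fun t => metricObjective a b c d e g γ₁ t)
      ((γ₁ ^ 2 * (c * γ₂ ^ 2 - a) + b * γ₂ ^ 2 - d) / (γ₁ * γ₂ ^ 2)) γ₂ := by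
  have h := (((((((hasDerivAt_const γ₂ γ₁).div (hasDerivAt_id γ₂) hγ₂).mul_const a).add
      (((hasDerivAt_id γ₂).div_const γ₁).mul_const b)).add
      (((hasDerivAt_id γ₂).const_mul γ₁).mul_const c)).add
      ((hasDerivAt_const γ₂ d).div ((hasDerivAt_id γ₂).const_mul γ₁)
        (mul_ne_zero hγ₁ hγ₂))).add
      (hasDerivAt_const γ₂ (2 * γ₁ * e))).add
      (hasDerivAt_const γ₂ (2 * g / γ₁))
  refine h.congr_deriv ?_
  simp only [id]
  field_simp
  ring

end Derivatives

theorem quartic_eq_zero_of_linear_in_sq {R : Type*} [CommRing R] {a b c d e g x y : R}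
    (hsum : x * (e * y + c * y ^ 2) = d + g * y) (hright : x * (c * y ^ 2 - a) = d - b * y ^ 2) :
    c * b * y ^ 4 + (c * g + e * b) * y ^ 3 - (d * e + g * a) * y - d * a = 0 := by
  linear_combination (e * y + c * y ^ 2) * hright - (c * y ^ 2 - a) * hsum

theorem stmt4_general (a b c d e g : ℝ)
    (γ₁ γ₂ : ℝ) (hγ₁ : 0 < γ₁) (hγ₂ : 0 < γ₂)
    (hcrit₁ : HasDerivAt (fun t : ℝ =>
      (t / γ₂) * a + (γ₂ / t) * b + t * γ₂ * c + d / (t * γ₂) + 2 * t * e + 2 * g / t)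
      0 γ₁)
    (hcrit₂ : HasDerivAt (fun t : ℝ =>
      (γ₁ / t) * a + (t / γ₁) * b + γ₁ * t * c + d / (γ₁ * t) + 2 * γ₁ * e + 2 * g / γ₁)
      0 γ₂) :
    c * b * γ₂ ^ 4 + (c * g + e * b) * γ₂ ^ 3 - (d * e + g * a) * γ₂ - d * a = 0 := by
  have hleft := (hasDerivAt_metricObjective_left a b c d e g hγ₁.ne' hγ₂.ne').unique hcrit₁
  have hright := (hasDerivAt_metricObjective_right a b c d e g hγ₁.ne' hγ₂.ne').unique hcrit₂
  have hleft₀ := (div_eq_zero_iff.mp hleft).resolve_right (by positivity)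
  have hright₀ := (div_eq_zero_iff.mp hright).resolve_right (by positivity)
  exact quartic_eq_zero_of_linear_in_sq (x := γ₁ ^ 2)
    (by linear_combination (hleft₀ + hright₀) / 2) (by linear_combination hright₀)

/-- If `(γ₁*, γ₂*)` with both coordinates positive is a critical point of
`f(γ₁,γ₂) = (γ₁/γ₂)a + (γ₂/γ₁)b + γ₁γ₂c + d/(γ₁γ₂) + 2γ₁e + 2g/γ₁`,
then `γ₂*` is a root of `p(γ) = cb·γ⁴ + (cg + eb)·γ³ − (de + ga)·γ − da`. -/
theorem stmt4 (a b c d e g : ℝ) (ha : 0 < a) (hb : 0 < b) (hc : 0 < c)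
    (hd : 0 < d) (he : 0 < e) (hg : 0 < g)
    (γ₁ γ₂ : ℝ) (hγ₁ : 0 < γ₁) (hγ₂ : 0 < γ₂)
    (hcrit₁ : HasDerivAt (fun t : ℝ =>
      (t / γ₂) * a + (γ₂ / t) * b + t * γ₂ * c + d / (t * γ₂) + 2 * t * e + 2 * g / t)
      0 γ₁)
    (hcrit₂ : HasDerivAt (fun t : ℝ =>
      (γ₁ / t) * a + (t / γ₁) * b + γ₁ * t * c + d / (γ₁ * t) + 2 * γ₁ * e + 2 * g / γ₁)
      0 γ₂) :
    c * b * γ₂ ^ 4 + (c * g + e * b) * γ₂ ^ 3 - (d * e + g * a) * γ₂ - d * a = 0 :=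
  stmt4_general a b c d e g γ₁ γ₂ hγ₁ hγ₂ hcrit₁ hcrit₂
end

section
/- Let a, b, c, d, e, g be strictly positive real numbers and define f(γ₁,γ₂) = (γ₁/γ₂)a + (γ₂/γ₁)b + γ₁γ₂c + d/(γ₁γ₂) + 2γ₁e + 2g/γ₁ for γ₁, γ₂ > 0. If (b + g)/(a + e) = (d + g)/(c + e), then the point (γ₁, γ₂) with γ₂ = 1 and γ₁ = √((b + d + 2g)/(a + c + 2e)) is a critical point of f (both partial derivatives of f vanish there). -/
/-! With `γ₂ = 1` the objective is `p γ₁ + q / γ₁` with `p = a + c + 2e` and `q = b + d + 2g`,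
minimised at `γ₁ = √(q / p)`. In `γ₂` it is `P γ₂ + Q / γ₂ + const` with
`P = b / γ₁ + γ₁ c` and `Q = γ₁ a + d / γ₁`, critical at `γ₂ = 1` iff `P = Q`, i.e.
`d - b = γ₁² (c - a)`. The ratio condition gives this: `(b + d + 2g) / (a + c + 2e)` is the mediant
of the two equal ratios, so `γ₁²` equals both of them. -/

theorem add_div_add_eq_div_of_div_eq {K : Type*} [Field K] {x y u v : K} (hu : u ≠ 0)
    (hv : v ≠ 0) (huv : u + v ≠ 0) (h : x / u = y / v) : (x + y) / (u + v) = x / u := by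
  rw [div_eq_div_iff hu hv] at h
  rw [div_eq_div_iff huv hu]
  linear_combination -h

theorem hasDerivAt_mul_add_div (p q : ℝ) {t : ℝ} (ht : t ≠ 0) :
    HasDerivAt (fun x => p * x + q / x) (p - q / t ^ 2) t := by
  have h := ((hasDerivAt_id' t).const_mul p).add ((hasDerivAt_inv ht).const_mul q)
  simp only [← div_eq_mul_inv] at h
  exact h.congr_deriv (by ring)

theorem hasDerivAt_mul_add_div_sqrt {p q : ℝ} (hp : 0 < p) (hq : 0 < q) :
    HasDerivAt (fun x => p * x + q / x) 0 (√(q / p)) := by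
  have hs : √(q / p) ≠ 0 := (Real.sqrt_pos.mpr (div_pos hq hp)).ne'
  refine (hasDerivAt_mul_add_div p q hs).congr_deriv ?_
  rw [Real.sq_sqrt (div_pos hq hp).le]
  field_simp
  ring

/-- If `(b + g)/(a + e) = (d + g)/(c + e)` then the point
`(γ₁, γ₂) = (√((b + d + 2g)/(a + c + 2e)), 1)` is a critical point of
`f(γ₁,γ₂) = (γ₁/γ₂)a + (γ₂/γ₁)b + γ₁γ₂c + d/(γ₁γ₂) + 2γ₁e + 2g/γ₁`. -/
theorem stmt9 (a b c d e g : ℝ) (ha : 0 < a) (hb : 0 < b) (hc : 0 < c)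
    (hd : 0 < d) (he : 0 < e) (hg : 0 < g)
    (hratio : (b + g) / (a + e) = (d + g) / (c + e)) :
    HasDerivAt (fun t : ℝ =>
        (t / 1) * a + (1 / t) * b + t * 1 * c + d / (t * 1) + 2 * t * e + 2 * g / t)
      0 (Real.sqrt ((b + d + 2 * g) / (a + c + 2 * e))) ∧
    HasDerivAt (fun t : ℝ =>
        (Real.sqrt ((b + d + 2 * g) / (a + c + 2 * e)) / t) * a
          + (t / Real.sqrt ((b + d + 2 * g) / (a + c + 2 * e))) * b
          + Real.sqrt ((b + d + 2 * g) / (a + c + 2 * e)) * t * c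
          + d / (Real.sqrt ((b + d + 2 * g) / (a + c + 2 * e)) * t)
          + 2 * Real.sqrt ((b + d + 2 * g) / (a + c + 2 * e)) * e
          + 2 * g / Real.sqrt ((b + d + 2 * g) / (a + c + 2 * e)))
      0 1 := by
  have hp : 0 < a + c + 2 * e := by positivity
  have hq : 0 < b + d + 2 * g := by positivity
  set s := √((b + d + 2 * g) / (a + c + 2 * e))
  have hs : s ≠ 0 := (Real.sqrt_pos.mpr (div_pos hq hp)).ne'
  have hs_sq : s ^ 2 = (b + g) / (a + e) := by
    rw [Real.sq_sqrt (div_pos hq hp).le, ← add_div_add_eq_div_of_div_eq (by positivity)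
      (by positivity) (by positivity) hratio]
    ring_nf
  have hbg : b + g = s ^ 2 * (a + e) := by rw [hs_sq]; field_simp
  have hdg : d + g = s ^ 2 * (c + e) := by rw [hs_sq, hratio]; field_simp
  constructor
  · exact (hasDerivAt_mul_add_div_sqrt hp hq).congr_of_eventuallyEq
      (.of_forall fun t => by ring)
  · have hcrit : b / s + s * c - (s * a + d / s) / 1 ^ 2 = 0 := by
      field_simp
      linear_combination hbg - hdg
    have h := (hasDerivAt_mul_add_div (b / s + s * c) (s * a + d / s) one_ne_zero).add_const
      (2 * s * e + 2 * g / s)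
    rw [hcrit] at h
    exact h.congr_of_eventuallyEq (.of_forall fun t => by ring)
end

section
/- Let a, b, c, d, e, g be strictly positive real numbers and define f(γ₁,γ₂) = (γ₁/γ₂)a + (γ₂/γ₁)b + γ₁γ₂c + d/(γ₁γ₂) + 2γ₁e + 2g/γ₁ for γ₁, γ₂ > 0. If (γ₁*, 1) is a critical point of f for some γ₁* > 0 (i.e., the optimal γ₂ equals 1), then (b + g)/(a + e) = (d + g)/(c + e) and γ₁* = √((b + d + 2g)/(a + c + 2e)). -/
/-!
Along the line `γ₂ = 1`, and along `γ₁ = γ₁*` as a function of `γ₂`, the objective has the form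
`p t + q / t + r`, whose derivative vanishes at `x ≠ 0` exactly when `p x² = q`. The two critical-point
equations give `(a + c + 2e) γ₁² = b + d + 2g` and `(a - c) γ₁² = b - d`, hence
`γ₁² (a + e) = b + g` and `γ₁² (c + e) = d + g`: both ratios equal `γ₁²`.
-/

theorem hasDerivAt_mul_add_div_add (p q r : ℝ) {x : ℝ} (hx : x ≠ 0) :
    HasDerivAt (fun t : ℝ => p * t + q / t + r) (p - q / x ^ 2) x := by
  have h :=
    (((hasDerivAt_id' x).const_mul p).fun_add ((hasDerivAt_inv hx).const_mul q)).add_const r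
  simp only [← div_eq_mul_inv] at h
  exact h.congr_deriv (by ring)

theorem mul_sq_eq_of_hasDerivAt_mul_add_div_add {p q r x : ℝ} (hx : x ≠ 0)
    (h : HasDerivAt (fun t : ℝ => p * t + q / t + r) 0 x) : p * x ^ 2 = q := by
  have hderiv := (hasDerivAt_mul_add_div_add p q r hx).unique h
  field_simp at hderiv
  linarith

theorem stmt10_general (a b c d e g : ℝ) (ha : 0 < a) (hc : 0 < c)
    (he : 0 < e)
    (γ₁ : ℝ) (hγ₁ : 0 < γ₁)
    (hcrit₁ : HasDerivAt (fun t : ℝ =>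
      (t / 1) * a + (1 / t) * b + t * 1 * c + d / (t * 1) + 2 * t * e + 2 * g / t)
      0 γ₁)
    (hcrit₂ : HasDerivAt (fun t : ℝ =>
      (γ₁ / t) * a + (t / γ₁) * b + γ₁ * t * c + d / (γ₁ * t) + 2 * γ₁ * e + 2 * g / γ₁)
      0 1) :
    (b + g) / (a + e) = (d + g) / (c + e) ∧
    γ₁ = Real.sqrt ((b + d + 2 * g) / (a + c + 2 * e)) := by
  have hcrit_γ₁ : (a + c + 2 * e) * γ₁ ^ 2 = b + d + 2 * g :=
    mul_sq_eq_of_hasDerivAt_mul_add_div_add (r := 0) hγ₁.ne' <| by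
      convert hcrit₁ using 1; funext t; ring
  have hcrit_γ₂ : (b / γ₁ + γ₁ * c) * 1 ^ 2 = γ₁ * a + d / γ₁ :=
    mul_sq_eq_of_hasDerivAt_mul_add_div_add (r := 2 * γ₁ * e + 2 * g / γ₁) one_ne_zero <| by
      convert hcrit₂ using 1; funext t; ring
  have hdiff : (a - c) * γ₁ ^ 2 = b - d := by
    field_simp at hcrit_γ₂; linarith
  have hae : (b + g) / (a + e) = γ₁ ^ 2 := by
    rw [div_eq_iff (by positivity)]; linarith
  have hce : (d + g) / (c + e) = γ₁ ^ 2 := by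
    rw [div_eq_iff (by positivity)]; linarith
  have hsum : (b + d + 2 * g) / (a + c + 2 * e) = γ₁ ^ 2 := by
    rw [div_eq_iff (by positivity)]; linarith
  exact ⟨hae.trans hce.symm, by rw [hsum, Real.sqrt_sq hγ₁.le]⟩

/-- If `(γ₁*, 1)` with `γ₁* > 0` is a critical point of
`f(γ₁,γ₂) = (γ₁/γ₂)a + (γ₂/γ₁)b + γ₁γ₂c + d/(γ₁γ₂) + 2γ₁e + 2g/γ₁`, then
`(b + g)/(a + e) = (d + g)/(c + e)` and `γ₁* = √((b + d + 2g)/(a + c + 2e))`. -/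
theorem stmt10 (a b c d e g : ℝ) (ha : 0 < a) (hb : 0 < b) (hc : 0 < c)
    (hd : 0 < d) (he : 0 < e) (hg : 0 < g)
    (γ₁ : ℝ) (hγ₁ : 0 < γ₁)
    (hcrit₁ : HasDerivAt (fun t : ℝ =>
      (t / 1) * a + (1 / t) * b + t * 1 * c + d / (t * 1) + 2 * t * e + 2 * g / t)
      0 γ₁)
    (hcrit₂ : HasDerivAt (fun t : ℝ =>
      (γ₁ / t) * a + (t / γ₁) * b + γ₁ * t * c + d / (γ₁ * t) + 2 * γ₁ * e + 2 * g / γ₁)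
      0 1) :
    (b + g) / (a + e) = (d + g) / (c + e) ∧
    γ₁ = Real.sqrt ((b + d + 2 * g) / (a + c + 2 * e)) :=
  stmt10_general a b c d e g ha hc he γ₁ hγ₁ hcrit₁ hcrit₂
end
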